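/- arXiv:0906.4714 — 2 statements merged into one kernel-verified Lean document; each statement's English description precedes it below -/
import Mathlib

section
/- For p ≥ 1 and q ≥ 2, the 2×2 matrix X_{p,q}(τ) with entries X₁₁ = Q₁(τ), X₁₂ = (-1)^{q+1} Q₃(τ), X₂₁ = (-1)^{q+1} Q₃(-τ), X₂₂ = Q₁(-τ), where Q₁(τ) = ((1-τ)/2)^{p+1} P_{q-1}^{(p+1,1-p)}(τ) and Q₃(τ) = ((1+τ)/2)^{p-1} P_{q+1}^{(-p-1,p-1)}(τ) with P_n^{(α,β)} the Jacobi polynomials, has determinant det X_{p,q}(τ) = W₀ (1-τ²)^{p-1} for some constant W₀ independent of τ. -/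
/-- Generalised binomial coefficient `C(z, k)` for real `z`. -/
noncomputable def gchoose (z : ℝ) (k : ℕ) : ℝ :=
  (∏ i ∈ Finset.range k, (z - i)) / (Nat.factorial k)

/-- The Jacobi polynomial `P_n^{(α,β)}(x)`. -/
noncomputable def jacobiP (n : ℕ) (α β : ℝ) (x : ℝ) : ℝ :=
  ∑ s ∈ Finset.range (n + 1),
    gchoose ((n : ℝ) + α) (n - s) * gchoose ((n : ℝ) + β) s *
      ((x - 1) / 2) ^ s * ((x + 1) / 2) ^ (n - s)

/-- `Q₁(τ) = ((1-τ)/2)^{p+1} P_{q-1}^{(p+1,1-p)}(τ)`. -/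
noncomputable def Q1 (p q : ℕ) (τ : ℝ) : ℝ :=
  ((1 - τ) / 2) ^ (p + 1) * jacobiP (q - 1) ((p : ℝ) + 1) (1 - (p : ℝ)) τ

/-- `Q₃(τ) = ((1+τ)/2)^{p-1} P_{q+1}^{(-p-1,p-1)}(τ)`. -/
noncomputable def Q3 (p q : ℕ) (τ : ℝ) : ℝ :=
  ((1 + τ) / 2) ^ (p - 1) * jacobiP (q + 1) (-(p : ℝ) - 1) ((p : ℝ) - 1) τ

/-- The fundamental matrix `X_{p,q}(τ)`. -/
noncomputable def Xmat (p q : ℕ) (τ : ℝ) : Matrix (Fin 2) (Fin 2) ℝ :=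
  !![Q1 p q τ, (-1 : ℝ) ^ (q + 1) * Q3 p q τ;
     (-1 : ℝ) ^ (q + 1) * Q3 p q (-τ), Q1 p q (-τ)]

set_option maxHeartbeats 1600000

namespace DetFM
noncomputable section
open Polynomial Finset

lemma gchoose_zero (z : ℝ) : gchoose z 0 = 1 := by simp [gchoose]

lemma gchoose_succ (z : ℝ) (k : ℕ) :
    gchoose z (k+1) = gchoose z k * (z - k) / (k+1) := by
  rw [gchoose, gchoose, Finset.prod_range_succ, Nat.factorial_succ, div_mul_eq_mul_div, div_div]
  push_cast
  ring_nf

lemma gchoose_succ_mul (z : ℝ) (k : ℕ) :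
    gchoose z (k+1) * ((k:ℝ)+1) = gchoose z k * (z - k) := by
  rw [gchoose_succ]
  have : ((k:ℝ)+1) ≠ 0 := by positivity
  field_simp

/-- canonical shifting lemma -/
lemma sum_shift (c : ℕ → ℝ) (T : ℕ → ℝ[X]) (σ n N : ℕ) (h : n + σ ≤ N) :
    ∑ s ∈ range n, Polynomial.C (c s) * T (s + σ)
      = ∑ k ∈ range N, Polynomial.C (if σ ≤ k ∧ k < n + σ then c (k - σ) else 0) * T k := by
  rw [show (∑ k ∈ range N, Polynomial.C (if σ ≤ k ∧ k < n + σ then c (k - σ) else 0) * T k)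
      = ∑ k ∈ Finset.Ico σ (n + σ), Polynomial.C (c (k - σ)) * T k from ?_]
  · rw [Finset.sum_Ico_eq_sum_range]
    simp only [Nat.add_sub_cancel]
    apply Finset.sum_congr rfl
    intro s _
    rw [Nat.add_sub_cancel_left, Nat.add_comm]
  · have hsub : Finset.Ico σ (n + σ) ⊆ range N := by
      intro x hx; rw [Finset.mem_range]; rw [Finset.mem_Ico] at hx; omega
    rw [← Finset.sum_subset hsub (fun x _ hx => ?_)]
    · apply Finset.sum_congr rfl
      intro k hk
      rw [Finset.mem_Ico] at hk
      rw [if_pos hk]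
    · have hc : ¬(σ ≤ x ∧ x < n + σ) := by simpa [Finset.mem_Ico] using hx
      rw [if_neg hc, map_zero, zero_mul]


def Y : ℝ[X] := X - Polynomial.C 1
def Z : ℝ[X] := X + Polynomial.C 1

lemma derivative_Y : derivative Y = 1 := by simp [Y]
lemma derivative_Z : derivative Z = 1 := by simp [Z]
lemma YZ : (1 - X^2 : ℝ[X]) = -(Y * Z) := by simp [Y,Z]; ring
lemma ZsubY : Z - Y = Polynomial.C 2 := by rw [Y,Z, show ((2:ℝ))=1+1 by norm_num, map_add]; ring

variable (p q : ℕ)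

def ca (s : ℕ) : ℝ := gchoose ((p:ℝ)+q) (q-1-s) * gchoose ((q:ℝ)-p) s
def cb (s : ℕ) : ℝ := gchoose ((q:ℝ)-p) (q+1-s) * gchoose ((p:ℝ)+q) s
def cc : ℝ := (q:ℝ)*((q:ℝ)+1)/(2*(p:ℝ))
def PA : ℝ[X] := ∑ s ∈ range q, Polynomial.C (ca p q s) * (Y^(p+1+s) * Z^(q-1-s))
def PB : ℝ[X] := ∑ s ∈ range (q+2), Polynomial.C (cb p q s) * (Y^(p+q-s) * Z^s)
def TT (k : ℕ) : ℝ[X] := Y^(p+1+k) * Z^(q+1-k)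
def SS (m : ℕ) : ℝ[X] := Y^(p+q+2-m) * Z^m

/-- derivative of a basis term -/
lemma deriv_term (a : ℝ) (m n : ℕ) :
    derivative (Polynomial.C a * (Y^m * Z^n))
      = Polynomial.C (a * m) * (Y^(m-1) * Z^n) + Polynomial.C (a * n) * (Y^m * Z^(n-1)) := by
  rw [derivative_C_mul, derivative_mul, derivative_pow, derivative_pow, derivative_Y, derivative_Z]
  simp only [map_mul, C_eq_natCast]
  ring

lemma keyA (s : ℕ) (hs : s < q) :
    (Z - Y) * ((1 - X^2) * derivative (Polynomial.C (ca p q s) * (Y^(p+1+s) * Z^(q-1-s))))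
      = Polynomial.C (-((p+1+s:ℕ):ℝ) * ca p q s) * TT p q s
      + Polynomial.C ((((p+1+s:ℕ):ℝ) - ((q-1-s:ℕ):ℝ)) * ca p q s) * TT p q (s+1)
      + Polynomial.C (((q-1-s:ℕ):ℝ) * ca p q s) * TT p q (s+2) := by
  rw [deriv_term, YZ, TT, TT, TT]
  rcases Nat.lt_or_ge (s+1) q with h | h
  · obtain ⟨n', hn'⟩ : ∃ n', q - 1 - s = n' + 1 := ⟨q - 2 - s, by omega⟩
    rw [hn',
      show (p+1+s)-1 = p+s by omega,
      show n'+1-1 = n' by omega,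
      show q+1-s = n'+3 by omega,
      show q+1-(s+1) = n'+2 by omega,
      show q+1-(s+2) = n'+1 by omega]
    push_cast
    simp only [map_mul, map_add, map_sub, map_neg, map_one, map_natCast, map_zero]
    ring
  · have hs1 : s = q - 1 := by omega
    rw [show q-1-s = 0 by omega,
      show (p+1+s)-1 = p+s by omega,
      show (0:ℕ)-1 = 0 by omega,
      show q+1-s = 2 by omega,
      show q+1-(s+1) = 1 by omega,
      show q+1-(s+2) = 0 by omega]
    push_cast
    simp only [map_mul, map_add, map_sub, map_neg, map_one, map_natCast, map_zero]
    ring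

lemma keyB (s : ℕ) (hs : s < q + 2) (hp : 1 ≤ p) (hq : 2 ≤ q) :
    (Z - Y) * ((1 - X^2) * derivative (Polynomial.C (cb p q s) * (Y^(p+q-s) * Z^s)))
      = Polynomial.C ((s:ℝ) * cb p q s) * SS p q s
      + Polynomial.C ((((p+q-s:ℕ):ℝ) - (s:ℝ)) * cb p q s) * SS p q (s+1)
      + Polynomial.C (-((p+q-s:ℕ):ℝ) * cb p q s) * SS p q (s+2) := by
  rw [deriv_term, YZ, SS, SS, SS]
  have hpq : 3 ≤ p + q := by omega
  rcases Nat.lt_or_ge s (p+q) with h | h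
  · obtain ⟨n', hn'⟩ : ∃ n', p + q - s = n' + 1 := ⟨p + q - 1 - s, by omega⟩
    rcases Nat.eq_zero_or_pos s with rfl | hs0
    · rw [hn',
        show (n'+1)-1 = n' by omega,
        show (0:ℕ)-1 = 0 by omega,
        show p+q+2-0 = n'+3 by omega,
        show p+q+2-(0+1) = n'+2 by omega,
        show p+q+2-(0+2) = n'+1 by omega]
      push_cast
      simp only [map_mul, map_add, map_sub, map_neg, map_one, map_natCast, map_zero]
      ring
    · obtain ⟨m', hm'⟩ : ∃ m', s = m' + 1 := ⟨s - 1, by omega⟩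
      rw [hn',
        show (n'+1)-1 = n' by omega,
        show s-1 = m' by omega,
        show p+q+2-s = n'+3 by omega,
        show p+q+2-(s+1) = n'+2 by omega,
        show p+q+2-(s+2) = n'+1 by omega, hm']
      push_cast
      simp only [map_mul, map_add, map_sub, map_neg, map_one, map_natCast, map_zero]
      ring
  · have hs1 : s = p + q := by omega
    obtain ⟨m', hm'⟩ : ∃ m', s = m' + 1 := ⟨s - 1, by omega⟩
    rw [show p+q-s = 0 by omega,
      show (0:ℕ)-1 = 0 by omega,
      show s-1 = m' by omega,
      show p+q+2-s = 2 by omega,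
      show p+q+2-(s+1) = 1 by omega,
      show p+q+2-(s+2) = 0 by omega, hm']
    push_cast
    simp only [map_mul, map_add, map_sub, map_neg, map_one, map_natCast, map_zero]
    ring

lemma E1k (hp : 1 ≤ p) (hq : 2 ≤ q) (k : ℕ) (hk : k < q + 2) :
    (if k < q then -((p+1+k:ℕ):ℝ) * ca p q k else 0)
    + (if 1 ≤ k ∧ k < q + 1 then (((p+1+(k-1):ℕ):ℝ) - ((q-1-(k-1):ℕ):ℝ)) * ca p q (k-1) else 0)
    + (if 2 ≤ k ∧ k < q + 2 then ((q-1-(k-2):ℕ):ℝ) * ca p q (k-2) else 0)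
    = (if 2 ≤ k ∧ k < q + 2 then ((p:ℝ)-1) * ca p q (k-2) else 0)
    + (if 1 ≤ k ∧ k < q + 1 then (2*cc p q - ((p:ℝ)-1)) * ca p q (k-1) else 0)
    + (-(2*cc p q)) * cb p q (q+1-k) := by
  have hp0 : ((p:ℝ)) ≠ 0 := by positivity
  have hq0 : ((q:ℝ)) ≠ 0 := by positivity
  have hq10 : ((q:ℝ)+1) ≠ 0 := by positivity
  set zP : ℝ := (p:ℝ)+q with hzP
  set zQ : ℝ := (q:ℝ)-p with hzQ
  rcases Nat.eq_zero_or_pos k with rfl | hk1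
  · -- k = 0
    rw [if_pos (by omega), if_neg (by omega), if_neg (by omega), if_neg (by omega),
      if_neg (by omega)]
    simp only [ca, cb, cc, Nat.sub_zero, Nat.add_sub_cancel_left, Nat.sub_self, gchoose_zero]
    have m1 : gchoose zP (q) * ((q:ℝ)) = gchoose zP (q-1) * ((p:ℝ)+1) := by
      have h := gchoose_succ_mul zP (q-1)
      rw [show q-1+1 = q by omega, Nat.cast_sub (by omega : 1 ≤ q)] at h
      push_cast at h ⊢
      linear_combination h
    have m2 : gchoose zP (q+1) * ((q:ℝ)+1) = gchoose zP (q) * ((p:ℝ)) := by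
      have h := gchoose_succ_mul zP q
      push_cast at h ⊢
      linear_combination h
    have e2 : gchoose zP (q+1)
        = gchoose zP (q-1) * (((p:ℝ)+1) * (p:ℝ)) / ((q:ℝ)*((q:ℝ)+1)) := by
      rw [eq_div_iff (by positivity)]
      linear_combination ((p:ℝ))*m1 + (q:ℝ)*m2
    rw [e2]
    push_cast
    field_simp
    ring
  rcases Nat.lt_or_ge k 2 with hk2 | hk2
  · -- k = 1
    have hk1' : k = 1 := by omega
    subst hk1'
    rw [if_pos (by omega), if_pos (by omega), if_neg (by omega), if_neg (by omega),
      if_pos (by omega)]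
    simp only [ca, cb, cc, Nat.sub_self, Nat.sub_zero]
    rw [show q-1-1 = q-2 by omega, show q+1-1 = q by omega, show q+1-q = 1 by omega,
      gchoose_zero]
    have m1 : gchoose zP (q-1) * ((q:ℝ)-1) = gchoose zP (q-2) * ((p:ℝ)+2) := by
      have h := gchoose_succ_mul zP (q-2)
      rw [show q-2+1 = q-1 by omega, Nat.cast_sub (by omega : 2 ≤ q)] at h
      push_cast at h ⊢
      linear_combination h
    have m2 : gchoose zP q * ((q:ℝ)) = gchoose zP (q-1) * ((p:ℝ)+1) := by
      have h := gchoose_succ_mul zP (q-1)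
      rw [show q-1+1 = q by omega, Nat.cast_sub (by omega : 1 ≤ q)] at h
      push_cast at h ⊢
      linear_combination h
    have m3 : gchoose zQ 1 = zQ := by
      have h := gchoose_succ_mul zQ 0
      rw [gchoose_zero] at h
      push_cast at h
      linear_combination h
    have hq1 : ((q:ℝ)-1) ≠ 0 := by
      have : (2:ℝ) ≤ (q:ℝ) := by exact_mod_cast hq
      intro h; nlinarith
    have e1 : gchoose zP (q-1) = gchoose zP (q-2) * ((p:ℝ)+2) / ((q:ℝ)-1) := by
      rw [eq_div_iff hq1]; linear_combination m1
    have e2 : gchoose zP q = gchoose zP (q-2) * (((p:ℝ)+2)*((p:ℝ)+1)) / (((q:ℝ)-1)*(q:ℝ)) := by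
      rw [eq_div_iff (by exact mul_ne_zero hq1 hq0)]
      linear_combination ((p:ℝ)+1)*m1 + ((q:ℝ)-1)*m2
    rw [e1, e2, m3]
    rw [Nat.cast_sub (by omega : 1 ≤ q)]
    push_cast
    field_simp
    ring
  rcases Nat.lt_or_ge k q with hkq | hkq
  · -- generic 2 ≤ k < q
    rw [if_pos hkq, if_pos (by omega), if_pos (by omega), if_pos (by omega), if_pos (by omega)]
    simp only [ca, cb, cc]
    rw [show q-1-(k-1) = q-k by omega, show q-1-(k-2) = q+1-k by omega,
      show q+1-(q+1-k) = k by omega, show p+1+(k-1) = p+k by omega]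
    have hcast1 : ((q-1-k:ℕ):ℝ) = (q:ℝ)-1-k := by
      rw [Nat.cast_sub (by omega), Nat.cast_sub (by omega : 1 ≤ q)]; push_cast; ring
    have hcastqk : ((q-k:ℕ):ℝ) = (q:ℝ)-k := Nat.cast_sub (by omega)
    have hcastq1k : ((q+1-k:ℕ):ℝ) = (q:ℝ)+1-k := by
      rw [Nat.cast_sub (by omega)]; push_cast; ring
    have hcastk1 : ((k-1:ℕ):ℝ) = (k:ℝ)-1 := by rw [Nat.cast_sub (by omega)]; norm_num
    have hcastk2 : ((k-2:ℕ):ℝ) = (k:ℝ)-2 := by rw [Nat.cast_sub (by omega)]; norm_num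
    have hqk : ((q:ℝ)-k) ≠ 0 := by
      have : (k:ℝ) < (q:ℝ) := by exact_mod_cast hkq
      intro h; nlinarith
    have hq1k : ((q:ℝ)+1-k) ≠ 0 := by
      have : (k:ℝ) < (q:ℝ) := by exact_mod_cast hkq
      intro h; nlinarith
    have hk10 : ((k:ℝ)-1) ≠ 0 := by
      have : (2:ℝ) ≤ (k:ℝ) := by exact_mod_cast hk2
      intro h; nlinarith
    have hk0 : ((k:ℝ)) ≠ 0 := by positivity
    have m1 : gchoose zP (q-k) * ((q:ℝ)-k) = gchoose zP (q-1-k) * ((p:ℝ)+1+k) := by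
      have h := gchoose_succ_mul zP (q-1-k)
      rw [show q-1-k+1 = q-k by omega, hcast1] at h
      push_cast at h ⊢
      linear_combination h
    have m2 : gchoose zP (q+1-k) * ((q:ℝ)+1-k) = gchoose zP (q-k) * ((p:ℝ)+k) := by
      have h := gchoose_succ_mul zP (q-k)
      rw [show q-k+1 = q+1-k by omega, hcastqk] at h
      push_cast at h ⊢
      linear_combination h
    have m3 : gchoose zQ (k-1) * ((k:ℝ)-1) = gchoose zQ (k-2) * ((q:ℝ)-(p:ℝ)-k+2) := by
      have h := gchoose_succ_mul zQ (k-2)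
      rw [show k-2+1 = k-1 by omega, hcastk2] at h
      push_cast at h ⊢
      linear_combination h
    have m4 : gchoose zQ k * ((k:ℝ)) = gchoose zQ (k-1) * ((q:ℝ)-(p:ℝ)-k+1) := by
      have h := gchoose_succ_mul zQ (k-1)
      rw [show k-1+1 = k by omega, hcastk1] at h
      push_cast at h ⊢
      linear_combination h
    have e1 : gchoose zP (q-k) = gchoose zP (q-1-k) * ((p:ℝ)+1+k) / ((q:ℝ)-k) := by
      rw [eq_div_iff hqk]; linear_combination m1
    have e2 : gchoose zP (q+1-k)
        = gchoose zP (q-1-k) * (((p:ℝ)+1+k)*((p:ℝ)+k)) / (((q:ℝ)-k)*((q:ℝ)+1-k)) := by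
      rw [eq_div_iff (mul_ne_zero hqk hq1k)]
      linear_combination ((p:ℝ)+k)*m1 + ((q:ℝ)-k)*m2
    have e3 : gchoose zQ (k-1) = gchoose zQ (k-2) * ((q:ℝ)-(p:ℝ)-k+2) / ((k:ℝ)-1) := by
      rw [eq_div_iff hk10]; linear_combination m3
    have e4 : gchoose zQ k
        = gchoose zQ (k-2) * (((q:ℝ)-(p:ℝ)-k+2)*((q:ℝ)-(p:ℝ)-k+1)) / (((k:ℝ)-1)*(k:ℝ)) := by
      rw [eq_div_iff (mul_ne_zero hk10 hk0)]
      linear_combination ((q:ℝ)-(p:ℝ)-k+1)*m3 + ((k:ℝ)-1)*m4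
    rw [e1, e2, e3, e4, hcastqk, hcastq1k]
    push_cast
    field_simp
    ring
  rcases Nat.lt_or_ge k (q+1) with hkq1 | hkq1
  · -- k = q
    have hkq' : k = q := by omega
    rw [if_neg (by omega), if_pos (by omega), if_pos (by omega), if_pos (by omega),
      if_pos (by omega)]
    rw [show k-1 = q-1 by omega, show k-2 = q-2 by omega, show q+1-k = 1 by omega,
      show q-1-(q-1) = 0 by omega, show q-1-(q-2) = 1 by omega,
      show p+1+(q-1) = p+q by omega]
    simp only [ca, cb, cc]
    rw [show q-1-(q-1) = 0 by omega, show q-1-(q-2) = 1 by omega,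
      show q+1-1 = q by omega, gchoose_zero]
    have hcastq2 : ((q-2:ℕ):ℝ) = (q:ℝ)-2 := by rw [Nat.cast_sub (by omega)]; norm_num
    have hcastq1 : ((q-1:ℕ):ℝ) = (q:ℝ)-1 := by rw [Nat.cast_sub (by omega)]; norm_num
    have hq1 : ((q:ℝ)-1) ≠ 0 := by
      have : (2:ℝ) ≤ (q:ℝ) := by exact_mod_cast hq
      intro h; nlinarith
    have m3 : gchoose zQ (q-1) * ((q:ℝ)-1) = gchoose zQ (q-2) * ((q:ℝ)-(p:ℝ)-q+2) := by
      have h := gchoose_succ_mul zQ (q-2)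
      rw [show q-2+1 = q-1 by omega, hcastq2] at h
      push_cast at h ⊢
      linear_combination h
    have m4 : gchoose zQ q * ((q:ℝ)) = gchoose zQ (q-1) * ((q:ℝ)-(p:ℝ)-q+1) := by
      have h := gchoose_succ_mul zQ (q-1)
      rw [show q-1+1 = q by omega, hcastq1] at h
      push_cast at h ⊢
      linear_combination h
    have m5 : gchoose zP 1 = zP := by
      have h := gchoose_succ_mul zP 0
      rw [gchoose_zero] at h
      push_cast at h
      linear_combination h
    have e3 : gchoose zQ (q-1) = gchoose zQ (q-2) * ((q:ℝ)-(p:ℝ)-q+2) / ((q:ℝ)-1) := by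
      rw [eq_div_iff hq1]; linear_combination m3
    have e4 : gchoose zQ q
        = gchoose zQ (q-2) * (((q:ℝ)-(p:ℝ)-q+2)*((q:ℝ)-(p:ℝ)-q+1)) / (((q:ℝ)-1)*(q:ℝ)) := by
      rw [eq_div_iff (mul_ne_zero hq1 hq0)]
      linear_combination ((q:ℝ)-(p:ℝ)-q+1)*m3 + ((q:ℝ)-1)*m4
    rw [e3, e4, m5]
    push_cast
    field_simp
    ring
  · -- k = q+1
    have hkq' : k = q+1 := by omega
    rw [if_neg (by omega), if_neg (by omega), if_pos (by omega), if_pos (by omega),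
      if_neg (by omega)]
    rw [show k-2 = q-1 by omega, show q+1-k = 0 by omega, show q-1-(q-1) = 0 by omega]
    simp only [ca, cb, cc]
    rw [show q-1-(q-1) = 0 by omega, Nat.sub_zero, gchoose_zero]
    have hcastq1 : ((q-1:ℕ):ℝ) = (q:ℝ)-1 := by rw [Nat.cast_sub (by omega)]; norm_num
    have m4 : gchoose zQ q * ((q:ℝ)) = gchoose zQ (q-1) * ((q:ℝ)-(p:ℝ)-q+1) := by
      have h := gchoose_succ_mul zQ (q-1)
      rw [show q-1+1 = q by omega, hcastq1] at h
      push_cast at h ⊢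
      linear_combination h
    have m5 : gchoose zQ (q+1) * ((q:ℝ)+1) = gchoose zQ q * ((q:ℝ)-(p:ℝ)-q) := by
      have h := gchoose_succ_mul zQ q
      push_cast at h ⊢
      linear_combination h
    have e5 : gchoose zQ (q+1)
        = gchoose zQ (q-1) * (((q:ℝ)-(p:ℝ)-q+1)*((q:ℝ)-(p:ℝ)-q)) / ((q:ℝ)*((q:ℝ)+1)) := by
      rw [eq_div_iff (by positivity)]
      linear_combination ((q:ℝ)-(p:ℝ)-q)*m4 + (q:ℝ)*m5
    rw [e5]
    push_cast
    field_simp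
    ring

lemma E2k (hp : 1 ≤ p) (hq : 2 ≤ q) (m : ℕ) (hm : m < q + 4) :
    (if m < q + 2 then (m:ℝ) * cb p q m else 0)
    + (if 1 ≤ m ∧ m < q + 3 then (((p+q-(m-1):ℕ):ℝ) - ((m-1:ℕ):ℝ)) * cb p q (m-1) else 0)
    + (if 2 ≤ m ∧ m < q + 4 then -((p+q-(m-2):ℕ):ℝ) * cb p q (m-2) else 0)
    = (if 2 ≤ m ∧ m < q + 2 then 2*cc p q * ca p q (q-1-(m-2)) else 0)
    - (if 2 ≤ m ∧ m < q + 4 then ((p:ℝ)-1) * cb p q (m-2) else 0)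
    - (if 1 ≤ m ∧ m < q + 3 then (2*cc p q - ((p:ℝ)-1)) * cb p q (m-1) else 0) := by
  have hp0 : ((p:ℝ)) ≠ 0 := by positivity
  have hq0 : ((q:ℝ)) ≠ 0 := by positivity
  have hq10 : ((q:ℝ)+1) ≠ 0 := by positivity
  rcases Nat.eq_zero_or_pos m with rfl | hm1
  · -- m = 0
    rw [if_pos (by omega), if_neg (by omega), if_neg (by omega), if_neg (by omega),
      if_neg (by omega), if_neg (by omega)]
    norm_num
  rcases Nat.lt_or_ge m 2 with hm2 | hm2
  · -- m = 1
    have hm1' : m = 1 := by omega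
    subst hm1'
    rw [if_pos (by omega), if_pos (by omega), if_neg (by omega), if_neg (by omega),
      if_neg (by omega), if_pos (by omega)]
    simp only [Nat.sub_self, Nat.sub_zero, ca, cb, cc]
    rw [show q+1-1 = q by omega, gchoose_zero]
    have mA : gchoose ((p:ℝ)+q) 1 = (p:ℝ)+q := by
      have h := gchoose_succ_mul ((p:ℝ)+q) 0
      rw [gchoose_zero] at h
      push_cast at h
      linear_combination h
    have mB : gchoose ((q:ℝ)-p) (q+1) * ((q:ℝ)+1) = gchoose ((q:ℝ)-p) q * (-(p:ℝ)) := by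
      have h := gchoose_succ_mul ((q:ℝ)-p) q
      push_cast at h ⊢
      linear_combination h
    have eB : gchoose ((q:ℝ)-p) (q+1) = gchoose ((q:ℝ)-p) q * (-(p:ℝ)) / ((q:ℝ)+1) := by
      rw [eq_div_iff hq10]; linear_combination mB
    rw [mA, eB]
    push_cast
    field_simp
    ring
  rcases Nat.lt_or_ge m (q+2) with hmq | hmq
  · -- generic 2 ≤ m ≤ q+1
    rw [if_pos (by omega), if_pos (by omega), if_pos (by omega), if_pos (by omega),
      if_pos (by omega), if_pos (by omega)]
    rw [show q-1-(m-2) = q+1-m by omega]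
    simp only [ca, cb, cc]
    rw [show q-1-(q+1-m) = m-2 by omega, show q+1-(m-1) = q+2-m by omega,
      show q+1-(m-2) = q+3-m by omega]
    have hcm1 : ((m-1:ℕ):ℝ) = (m:ℝ)-1 := by rw [Nat.cast_sub (by omega)]; norm_num
    have hcm2 : ((m-2:ℕ):ℝ) = (m:ℝ)-2 := by rw [Nat.cast_sub (by omega)]; norm_num
    have hcq1m : ((q+1-m:ℕ):ℝ) = (q:ℝ)+1-m := by rw [Nat.cast_sub (by omega)]; push_cast; ring
    have hcq2m : ((q+2-m:ℕ):ℝ) = (q:ℝ)+2-m := by rw [Nat.cast_sub (by omega)]; push_cast; ring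
    have hc1 : ((p+q-(m-1):ℕ):ℝ) = (p:ℝ)+q-m+1 := by
      rw [Nat.cast_sub (by omega), Nat.cast_sub (by omega)]; push_cast; ring
    have hc2 : ((p+q-(m-2):ℕ):ℝ) = (p:ℝ)+q-m+2 := by
      rw [Nat.cast_sub (by omega), Nat.cast_sub (by omega)]; push_cast; ring
    have hmr : (2:ℝ) ≤ (m:ℝ) := by exact_mod_cast hm2
    have hmqr : (m:ℝ) ≤ (q:ℝ)+1 := by exact_mod_cast (by omega : m ≤ q+1)
    have hm0 : ((m:ℝ)) ≠ 0 := by positivity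
    have hm10 : ((m:ℝ)-1) ≠ 0 := by intro h; nlinarith
    have hq2m0 : ((q:ℝ)+2-m) ≠ 0 := by intro h; nlinarith
    have hq3m0 : ((q:ℝ)+3-m) ≠ 0 := by intro h; nlinarith
    have mG1 : gchoose ((p:ℝ)+q) (m-1) * ((m:ℝ)-1)
        = gchoose ((p:ℝ)+q) (m-2) * ((p:ℝ)+q-m+2) := by
      have h := gchoose_succ_mul ((p:ℝ)+q) (m-2)
      rw [show m-2+1 = m-1 by omega, hcm2] at h
      push_cast at h ⊢
      linear_combination h
    have mG2 : gchoose ((p:ℝ)+q) m * ((m:ℝ))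
        = gchoose ((p:ℝ)+q) (m-1) * ((p:ℝ)+q-m+1) := by
      have h := gchoose_succ_mul ((p:ℝ)+q) (m-1)
      rw [show m-1+1 = m by omega, hcm1] at h
      push_cast at h ⊢
      linear_combination h
    have mH1 : gchoose ((q:ℝ)-p) (q+2-m) * ((q:ℝ)+2-m)
        = gchoose ((q:ℝ)-p) (q+1-m) * ((m:ℝ)-p-1) := by
      have h := gchoose_succ_mul ((q:ℝ)-p) (q+1-m)
      rw [show q+1-m+1 = q+2-m by omega, hcq1m] at h
      push_cast at h ⊢
      linear_combination h
    have mH2 : gchoose ((q:ℝ)-p) (q+3-m) * ((q:ℝ)+3-m)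
        = gchoose ((q:ℝ)-p) (q+2-m) * ((m:ℝ)-p-2) := by
      have h := gchoose_succ_mul ((q:ℝ)-p) (q+2-m)
      rw [show q+2-m+1 = q+3-m by omega, hcq2m] at h
      push_cast at h ⊢
      linear_combination h
    have eG1 : gchoose ((p:ℝ)+q) (m-1)
        = gchoose ((p:ℝ)+q) (m-2) * ((p:ℝ)+q-m+2) / ((m:ℝ)-1) := by
      rw [eq_div_iff hm10]; linear_combination mG1
    have eG2 : gchoose ((p:ℝ)+q) m
        = gchoose ((p:ℝ)+q) (m-2) * (((p:ℝ)+q-m+2)*((p:ℝ)+q-m+1)) / (((m:ℝ)-1)*(m:ℝ)) := by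
      rw [eq_div_iff (mul_ne_zero hm10 hm0)]
      linear_combination ((p:ℝ)+q-(m:ℝ)+1)*mG1 + ((m:ℝ)-1)*mG2
    have eH1 : gchoose ((q:ℝ)-p) (q+2-m)
        = gchoose ((q:ℝ)-p) (q+1-m) * ((m:ℝ)-p-1) / ((q:ℝ)+2-m) := by
      rw [eq_div_iff hq2m0]; linear_combination mH1
    have eH2 : gchoose ((q:ℝ)-p) (q+3-m)
        = gchoose ((q:ℝ)-p) (q+1-m) * (((m:ℝ)-p-1)*((m:ℝ)-p-2)) / (((q:ℝ)+2-m)*((q:ℝ)+3-m)) := by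
      rw [eq_div_iff (mul_ne_zero hq2m0 hq3m0)]
      linear_combination ((m:ℝ)-(p:ℝ)-2)*mH1 + ((q:ℝ)+2-(m:ℝ))*mH2
    rw [eG1, eG2, eH1, eH2, hc1, hc2, hcm1]
    push_cast
    field_simp
    ring
  rcases Nat.lt_or_ge m (q+3) with hmq3 | hmq3
  · -- m = q+2
    have hm' : m = q+2 := by omega
    rw [if_neg (by omega), if_pos (by omega), if_pos (by omega), if_neg (by omega),
      if_pos (by omega), if_pos (by omega)]
    rw [show m-1 = q+1 by omega, show m-2 = q by omega,
      show p+q-(q+1) = p-1 by omega, show p+q-q = p by omega]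
    simp only [ca, cb, cc]
    rw [show q+1-(q+1) = 0 by omega, show q+1-q = 1 by omega, gchoose_zero]
    have hcp1 : ((p-1:ℕ):ℝ) = (p:ℝ)-1 := by rw [Nat.cast_sub (by omega)]; norm_num
    have mH : gchoose ((q:ℝ)-p) 1 = (q:ℝ)-p := by
      have h := gchoose_succ_mul ((q:ℝ)-p) 0
      rw [gchoose_zero] at h
      push_cast at h
      linear_combination h
    have mG : gchoose ((p:ℝ)+q) (q+1) * ((q:ℝ)+1) = gchoose ((p:ℝ)+q) q * ((p:ℝ)) := by
      have h := gchoose_succ_mul ((p:ℝ)+q) q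
      push_cast at h ⊢
      linear_combination h
    have eG : gchoose ((p:ℝ)+q) (q+1) = gchoose ((p:ℝ)+q) q * ((p:ℝ)) / ((q:ℝ)+1) := by
      rw [eq_div_iff hq10]; linear_combination mG
    rw [mH, eG, hcp1]
    push_cast
    field_simp
    ring
  · -- m = q+3
    have hm' : m = q+3 := by omega
    rw [if_neg (by omega), if_neg (by omega), if_pos (by omega), if_neg (by omega),
      if_pos (by omega), if_neg (by omega)]
    rw [show m-2 = q+1 by omega, show p+q-(q+1) = p-1 by omega]
    have hcp1 : ((p-1:ℕ):ℝ) = (p:ℝ)-1 := by rw [Nat.cast_sub (by omega)]; norm_num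
    rw [hcp1]
    ring

lemma rA (s : ℕ) (hs : s < q) :
    (Polynomial.C ((p:ℝ)-1) * Y^2 + Polynomial.C (2*cc p q - ((p:ℝ)-1)) * (Y*Z))
        * (Polynomial.C (ca p q s) * (Y^(p+1+s) * Z^(q-1-s)))
      = Polynomial.C ((2*cc p q - ((p:ℝ)-1)) * ca p q s) * TT p q (s+1)
      + Polynomial.C (((p:ℝ)-1) * ca p q s) * TT p q (s+2) := by
  rw [TT, TT, show q+1-(s+1) = (q-1-s)+1 by omega, show q+1-(s+2) = q-1-s by omega]
  simp only [map_mul, map_add, map_sub, map_neg, map_one, map_natCast, map_zero]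
  ring

lemma rB (s : ℕ) (hp : 1 ≤ p) (hs : s < q+2) :
    Polynomial.C (2*cc p q) * Y^2 * (Polynomial.C (cb p q s) * (Y^(p+q-s) * Z^s))
      = Polynomial.C (2*cc p q * cb p q s) * (Y^(p+q+2-s) * Z^s) := by
  rw [show p+q+2-s = (p+q-s)+2 by omega]
  simp only [map_mul]
  ring

lemma E1 (hp : 1 ≤ p) (hq : 2 ≤ q) :
    (Z - Y) * ((1 - X^2) * derivative (PA p q))
      = (Polynomial.C ((p:ℝ)-1) * Y^2 + Polynomial.C (2*cc p q - ((p:ℝ)-1)) * (Y*Z)) * PA p q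
        - Polynomial.C (2*cc p q) * Y^2 * PB p q := by
  have hL : (Z - Y) * ((1 - X^2) * derivative (PA p q))
      = (∑ s ∈ range q, Polynomial.C (-((p+1+s:ℕ):ℝ) * ca p q s) * TT p q s)
      + ((∑ s ∈ range q, Polynomial.C ((((p+1+s:ℕ):ℝ) - ((q-1-s:ℕ):ℝ)) * ca p q s) * TT p q (s+1))
      + (∑ s ∈ range q, Polynomial.C (((q-1-s:ℕ):ℝ) * ca p q s) * TT p q (s+2))) := by
    rw [PA, derivative_sum, Finset.mul_sum, Finset.mul_sum,
      ← Finset.sum_add_distrib, ← Finset.sum_add_distrib]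
    apply Finset.sum_congr rfl
    intro s hs
    rw [Finset.mem_range] at hs
    rw [keyA p q s hs]
    ring
  have hR : (Polynomial.C ((p:ℝ)-1) * Y^2 + Polynomial.C (2*cc p q - ((p:ℝ)-1)) * (Y*Z)) * PA p q
      = (∑ s ∈ range q, Polynomial.C ((2*cc p q - ((p:ℝ)-1)) * ca p q s) * TT p q (s+1))
      + (∑ s ∈ range q, Polynomial.C (((p:ℝ)-1) * ca p q s) * TT p q (s+2)) := by
    rw [PA, Finset.mul_sum, ← Finset.sum_add_distrib]
    apply Finset.sum_congr rfl
    intro s hs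
    rw [Finset.mem_range] at hs
    rw [rA p q s hs]
  have hB : Polynomial.C (2*cc p q) * Y^2 * PB p q
      = ∑ k ∈ range (q+2), Polynomial.C (2*cc p q * cb p q (q+1-k)) * TT p q k := by
    rw [PB, Finset.mul_sum]
    rw [show (∑ s ∈ range (q+2),
        Polynomial.C (2*cc p q) * Y^2 * (Polynomial.C (cb p q s) * (Y^(p+q-s) * Z^s)))
      = ∑ s ∈ range (q+2), Polynomial.C (2*cc p q * cb p q s) * (Y^(p+q+2-s) * Z^s) from
        Finset.sum_congr rfl (fun s hs => rB p q s hp (Finset.mem_range.mp hs))]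
    rw [← Finset.sum_range_reflect
      (fun s => Polynomial.C (2*cc p q * cb p q s) * (Y^(p+q+2-s) * Z^s)) (q+2)]
    apply Finset.sum_congr rfl
    intro k hk
    rw [Finset.mem_range] at hk
    rw [show q+2-1-k = q+1-k by omega, TT, show p+q+2-(q+1-k) = p+1+k by omega]
  have sh0 := sum_shift (fun j => -((p+1+j:ℕ):ℝ) * ca p q j) (TT p q) 0 q (q+2) (by omega)
  simp only [Nat.add_zero, Nat.sub_zero, Nat.zero_le, true_and] at sh0
  have sh1 := sum_shift (fun j => (((p+1+j:ℕ):ℝ) - ((q-1-j:ℕ):ℝ)) * ca p q j)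
      (TT p q) 1 q (q+2) (by omega)
  have sh2 := sum_shift (fun j => ((q-1-j:ℕ):ℝ) * ca p q j) (TT p q) 2 q (q+2) (by omega)
  have sh1' := sum_shift (fun j => (2*cc p q - ((p:ℝ)-1)) * ca p q j) (TT p q) 1 q (q+2) (by omega)
  have sh2' := sum_shift (fun j => ((p:ℝ)-1) * ca p q j) (TT p q) 2 q (q+2) (by omega)
  rw [hL, hR, hB, sh0, sh1, sh2, sh1', sh2', ← Finset.sum_add_distrib,
    ← Finset.sum_add_distrib, ← Finset.sum_add_distrib, ← Finset.sum_sub_distrib]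
  apply Finset.sum_congr rfl
  intro k hk
  rw [Finset.mem_range] at hk
  have h := E1k p q hp hq k hk
  have h' := congrArg Polynomial.C h
  simp only [map_add, map_neg, map_mul] at h' ⊢
  linear_combination (TT p q k) * h'

lemma rA2 (s : ℕ) (hs : s < q) :
    Polynomial.C (2*cc p q) * Z^2 * (Polynomial.C (ca p q s) * (Y^(p+1+s) * Z^(q-1-s)))
      = Polynomial.C (2*cc p q * ca p q s) * (Y^(p+1+s) * Z^(q+1-s)) := by
  rw [show q+1-s = (q-1-s)+2 by omega]
  simp only [map_mul]
  ring

lemma rB2 (s : ℕ) (hp : 1 ≤ p) (hs : s < q+2) :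
    (Polynomial.C ((p:ℝ)-1) * Z^2 + Polynomial.C (2*cc p q - ((p:ℝ)-1)) * (Y*Z))
        * (Polynomial.C (cb p q s) * (Y^(p+q-s) * Z^s))
      = Polynomial.C ((2*cc p q - ((p:ℝ)-1)) * cb p q s) * SS p q (s+1)
      + Polynomial.C (((p:ℝ)-1) * cb p q s) * SS p q (s+2) := by
  rw [SS, SS, show p+q+2-(s+1) = (p+q-s)+1 by omega, show p+q+2-(s+2) = p+q-s by omega]
  simp only [map_mul, map_add, map_sub, map_neg, map_one, map_natCast, map_zero]
  ring

lemma E2 (hp : 1 ≤ p) (hq : 2 ≤ q) :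
    (Z - Y) * ((1 - X^2) * derivative (PB p q))
      = Polynomial.C (2*cc p q) * Z^2 * PA p q
        - (Polynomial.C ((p:ℝ)-1) * Z^2 + Polynomial.C (2*cc p q - ((p:ℝ)-1)) * (Y*Z)) * PB p q := by
  have hL : (Z - Y) * ((1 - X^2) * derivative (PB p q))
      = (∑ s ∈ range (q+2), Polynomial.C ((s:ℝ) * cb p q s) * SS p q s)
      + ((∑ s ∈ range (q+2), Polynomial.C ((((p+q-s:ℕ):ℝ) - (s:ℝ)) * cb p q s) * SS p q (s+1))
      + (∑ s ∈ range (q+2), Polynomial.C (-((p+q-s:ℕ):ℝ) * cb p q s) * SS p q (s+2))) := by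
    rw [PB, derivative_sum, Finset.mul_sum, Finset.mul_sum,
      ← Finset.sum_add_distrib, ← Finset.sum_add_distrib]
    apply Finset.sum_congr rfl
    intro s hs
    rw [Finset.mem_range] at hs
    rw [keyB p q s hs hp hq]
    ring
  have hA : Polynomial.C (2*cc p q) * Z^2 * PA p q
      = ∑ j ∈ range q, Polynomial.C (2*cc p q * ca p q (q-1-j)) * SS p q (j+2) := by
    rw [PA, Finset.mul_sum, ← Finset.sum_range_reflect
      (fun j => Polynomial.C (2*cc p q * ca p q (q-1-j)) * SS p q (j+2)) q]
    apply Finset.sum_congr rfl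
    intro s hs
    rw [Finset.mem_range] at hs
    beta_reduce
    rw [show q-1-(q-1-s) = s by omega, SS, show (q-1-s)+2 = q+1-s by omega,
      show p+q+2-(q+1-s) = p+1+s by omega]
    exact rA2 p q s hs
  have hB : (Polynomial.C ((p:ℝ)-1) * Z^2 + Polynomial.C (2*cc p q - ((p:ℝ)-1)) * (Y*Z)) * PB p q
      = (∑ s ∈ range (q+2), Polynomial.C ((2*cc p q - ((p:ℝ)-1)) * cb p q s) * SS p q (s+1))
      + (∑ s ∈ range (q+2), Polynomial.C (((p:ℝ)-1) * cb p q s) * SS p q (s+2)) := by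
    rw [PB, Finset.mul_sum, ← Finset.sum_add_distrib]
    apply Finset.sum_congr rfl
    intro s hs
    rw [Finset.mem_range] at hs
    rw [rB2 p q s hp hs]
  have sh0 := sum_shift (fun j => (j:ℝ) * cb p q j) (SS p q) 0 (q+2) (q+4) (by omega)
  simp only [Nat.add_zero, Nat.sub_zero, Nat.zero_le, true_and] at sh0
  have sh1 := sum_shift (fun j => (((p+q-j:ℕ):ℝ) - (j:ℝ)) * cb p q j) (SS p q) 1 (q+2) (q+4) (by omega)
  have sh2 := sum_shift (fun j => -((p+q-j:ℕ):ℝ) * cb p q j) (SS p q) 2 (q+2) (q+4) (by omega)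
  have shA := sum_shift (fun j => 2*cc p q * ca p q (q-1-j)) (SS p q) 2 q (q+4) (by omega)
  have sh1' := sum_shift (fun j => (2*cc p q - ((p:ℝ)-1)) * cb p q j) (SS p q) 1 (q+2) (q+4) (by omega)
  have sh2' := sum_shift (fun j => ((p:ℝ)-1) * cb p q j) (SS p q) 2 (q+2) (q+4) (by omega)
  simp only [show q+2+1 = q+3 by omega, show q+2+2 = q+4 by omega] at sh1 sh2 sh1' sh2'
  rw [hL, hA, hB, sh0, sh1, sh2, shA, sh1', sh2', ← Finset.sum_add_distrib,
    ← Finset.sum_add_distrib, ← Finset.sum_add_distrib, ← Finset.sum_sub_distrib]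
  apply Finset.sum_congr rfl
  intro k hk
  rw [Finset.mem_range] at hk
  have h := E2k p q hp hq k hk
  have h' := congrArg Polynomial.C h
  simp only [map_add, map_neg, map_mul, map_sub] at h' ⊢
  linear_combination (SS p q k) * h'

lemma Ycomp : Y.comp (-X : ℝ[X]) = -Z := by simp [Y, Z]; ring
lemma Zcomp : Z.comp (-X : ℝ[X]) = -Y := by simp [Y, Z]; ring

lemma dcomp (P : ℝ[X]) : (derivative P).comp (-X : ℝ[X]) = -derivative (P.comp (-X)) := by
  rw [Polynomial.derivative_comp]
  simp

def Pdet : ℝ[X] := PA p q * (PA p q).comp (-X) - PB p q * (PB p q).comp (-X)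

lemma ode (hp : 1 ≤ p) (hq : 2 ≤ q) :
    (1 - X^2) * derivative (Pdet p q)
      = Polynomial.C (-(2*((p:ℝ)-1))) * X * Pdet p q := by
  have e1 := E1 p q hp hq
  have e2 := E2 p q hp hq
  have e1c := congrArg (fun P : ℝ[X] => P.comp (-X)) e1
  have e2c := congrArg (fun P : ℝ[X] => P.comp (-X)) e2
  simp only [mul_comp, sub_comp, add_comp, pow_comp, one_comp, C_comp, X_comp, dcomp,
    Ycomp, Zcomp] at e1c e2c
  rw [Pdet, derivative_sub, derivative_mul, derivative_mul]
  apply mul_left_cancel₀ (show (Polynomial.C (2:ℝ)) ≠ 0 by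
    simp only [ne_eq, Polynomial.C_eq_zero]; norm_num)
  simp only [Y, Z] at e1 e2 e1c e2c ⊢
  simp only [map_sub, map_mul, map_add, map_neg, map_one, map_ofNat] at e1 e2 e1c e2c ⊢
  linear_combination ((PA p q).comp (-X : ℝ[X]))*e1 - (PA p q)*e1c
    - ((PB p q).comp (-X : ℝ[X]))*e2 + (PB p q)*e2c

lemma one_sub_X_sq_ne : (1 - X^2 : ℝ[X]) ≠ 0 := by
  intro hc
  have := congrArg (Polynomial.eval 0) hc
  simp at this

lemma ode_const : ∀ (n : ℕ) (P : ℝ[X]),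
    (1 - X^2) * derivative P = Polynomial.C (-(2*(n:ℝ))) * X * P →
    ∃ w : ℝ, P = Polynomial.C w * (1-X^2)^n := by
  intro n
  induction n with
  | zero =>
    intro P h
    norm_num at h
    have hd : derivative P = 0 := by
      rcases h with h | h
      · exact absurd h one_sub_X_sq_ne
      · exact Polynomial.derivative_of_natDegree_zero h
    refine ⟨P.coeff 0, ?_⟩
    rw [pow_zero, mul_one]
    exact Polynomial.eq_C_of_natDegree_eq_zero
      (Polynomial.natDegree_eq_zero_of_derivative_eq_zero hd)
  | succ n ih =>
    intro P h
    have hcast : (-(2*((n+1:ℕ):ℝ))) = -(2*((n:ℝ)+1)) := by push_cast; ring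
    rw [hcast] at h
    have hpos : (0:ℝ) < 2*((n:ℝ)+1) := by positivity
    have h1 : P.eval 1 = 0 := by
      have hv := congrArg (Polynomial.eval 1) h
      simp only [eval_mul, eval_sub, eval_pow, eval_one, eval_X, eval_C] at hv
      have h0 : (2*((n:ℝ)+1)) * P.eval 1 = 0 := by linear_combination hv
      rcases mul_eq_zero.mp h0 with hc | hc
      · exact absurd hc (by linarith)
      · exact hc
    have hm1 : P.eval (-1) = 0 := by
      have hv := congrArg (Polynomial.eval (-1)) h
      simp only [eval_mul, eval_sub, eval_pow, eval_one, eval_X, eval_C] at hv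
      have h0 : (2*((n:ℝ)+1)) * P.eval (-1) = 0 := by linear_combination -hv
      rcases mul_eq_zero.mp h0 with hc | hc
      · exact absurd hc (by linarith)
      · exact hc
    have d1 : (X - Polynomial.C (1:ℝ)) ∣ P := (Polynomial.dvd_iff_isRoot).mpr h1
    have d2 : (X + Polynomial.C (1:ℝ)) ∣ P := by
      have := (Polynomial.dvd_iff_isRoot).mpr hm1
      rw [map_neg, sub_neg_eq_add] at this
      exact this
    have hcop : IsCoprime (X - Polynomial.C (1:ℝ)) (X + Polynomial.C (1:ℝ)) := by
      refine ⟨Polynomial.C (-(2⁻¹:ℝ)), Polynomial.C (2⁻¹:ℝ), ?_⟩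
      have h2 : (Polynomial.C (2⁻¹:ℝ)) + Polynomial.C (2⁻¹:ℝ) = 1 := by
        rw [← map_add]; norm_num
      simp only [map_neg, map_one]
      linear_combination h2
    obtain ⟨Q, hQ⟩ := hcop.mul_dvd d1 d2
    have hP : P = (1 - X^2) * (-Q) := by rw [hQ]; simp only [map_one]; ring
    have hd2 : derivative (1-X^2:ℝ[X]) = -(2*X) := by
      simp [derivative_pow]
      exact map_ofNat Polynomial.C 2
    rw [hP, derivative_mul, hd2] at h
    have h' : (1-X^2:ℝ[X]) * ((1-X^2) * derivative (-Q)
        - Polynomial.C (-(2*(n:ℝ))) * X * (-Q)) = 0 := by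
      simp only [map_neg, map_mul, map_add, map_one, map_ofNat] at h ⊢
      push_cast at h ⊢
      linear_combination h
    have hz : (1-X^2:ℝ[X]) * derivative (-Q) = Polynomial.C (-(2*(n:ℝ))) * X * (-Q) := by
      rcases mul_eq_zero.mp h' with hc | hc
      · exact absurd hc one_sub_X_sq_ne
      · linear_combination hc
    obtain ⟨w, hw⟩ := ih (-Q) hz
    refine ⟨w, ?_⟩
    rw [hP, hw, pow_succ]
    ring

lemma evalY (τ : ℝ) : Y.eval τ = τ - 1 := by simp [Y]
lemma evalZ (τ : ℝ) : Z.eval τ = τ + 1 := by simp [Z]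

lemma Q1_eq (hq : 2 ≤ q) (τ : ℝ) :
    (2:ℝ)^(p+q) * Q1 p q τ = (-1:ℝ)^(p+1) * (PA p q).eval τ := by
  rw [Q1, jacobiP, show q-1+1 = q by omega, PA, Polynomial.eval_finset_sum,
    Finset.mul_sum, Finset.mul_sum, Finset.mul_sum]
  apply Finset.sum_congr rfl
  intro s hs
  rw [Finset.mem_range] at hs
  rw [Polynomial.eval_mul, Polynomial.eval_C, Polynomial.eval_mul, Polynomial.eval_pow,
    Polynomial.eval_pow, evalY, evalZ]
  have hA : ((q-1:ℕ):ℝ) + ((p:ℝ)+1) = (p:ℝ)+(q:ℝ) := by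
    rw [Nat.cast_sub (by omega : 1 ≤ q)]; ring
  have hB : ((q-1:ℕ):ℝ) + (1-(p:ℝ)) = (q:ℝ)-(p:ℝ) := by
    rw [Nat.cast_sub (by omega : 1 ≤ q)]; ring
  rw [hA, hB, ca]
  have e1 : ((1-τ)/2)^(p+1) = (-1:ℝ)^(p+1) * ((τ-1)/2)^(p+1) := by
    rw [← neg_pow, show (-((τ-1)/2)) = (1-τ)/2 by ring]
  rw [e1]
  have hkey : (2:ℝ)^(p+q) * (((τ-1)/2)^(p+1) * (((τ-1)/2)^s * ((τ+1)/2)^(q-1-s)))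
      = (τ-1)^(p+1+s) * (τ+1)^(q-1-s) := by
    have hsplit : ((2:ℝ))^(p+q) = 2^(p+1) * 2^s * 2^(q-1-s) := by
      rw [← pow_add, ← pow_add]; congr 1; omega
    have hpow : ((τ-1):ℝ)^(p+1+s) = (τ-1)^(p+1) * (τ-1)^s := by rw [← pow_add]
    rw [div_pow, div_pow, div_pow, hsplit, hpow]
    have h1 : ((2:ℝ))^(p+1) ≠ 0 := by positivity
    have h2 : ((2:ℝ))^s ≠ 0 := by positivity
    have h3 : ((2:ℝ))^(q-1-s) ≠ 0 := by positivity
    field_simp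
  linear_combination ((-1:ℝ)^(p+1) * (gchoose ((p:ℝ)+q) (q-1-s) * gchoose ((q:ℝ)-p) s)) * hkey

lemma Q3_eq (hp : 1 ≤ p) (hq : 2 ≤ q) (τ : ℝ) :
    (2:ℝ)^(p+q) * Q3 p q (-τ) = (-1:ℝ)^(q+1) * ((-1:ℝ)^(p+1) * (PB p q).eval τ) := by
  rw [Q3, jacobiP, show q+1+1 = q+2 by omega, PB, Polynomial.eval_finset_sum,
    Finset.mul_sum, Finset.mul_sum, Finset.mul_sum, Finset.mul_sum]
  apply Finset.sum_congr rfl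
  intro s hs
  rw [Finset.mem_range] at hs
  rw [Polynomial.eval_mul, Polynomial.eval_C, Polynomial.eval_mul, Polynomial.eval_pow,
    Polynomial.eval_pow, evalY, evalZ]
  have hA : ((q+1:ℕ):ℝ) + (-(p:ℝ)-1) = (q:ℝ)-(p:ℝ) := by push_cast; ring
  have hB : ((q+1:ℕ):ℝ) + ((p:ℝ)-1) = (p:ℝ)+(q:ℝ) := by push_cast; ring
  rw [hA, hB, cb]
  have e1 : ((1+(-τ))/2)^(p-1) = (-1:ℝ)^(p-1) * ((τ-1)/2)^(p-1) := by
    rw [← neg_pow, show (-((τ-1)/2)) = (1+(-τ))/2 by ring]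
  have e2 : ((-τ-1)/2)^s = (-1:ℝ)^s * ((τ+1)/2)^s := by
    rw [← neg_pow, show (-((τ+1)/2)) = (-τ-1)/2 by ring]
  have e3 : ((-τ+1)/2)^(q+1-s) = (-1:ℝ)^(q+1-s) * ((τ-1)/2)^(q+1-s) := by
    rw [← neg_pow, show (-((τ-1)/2)) = (-τ+1)/2 by ring]
  rw [e1, e2, e3]
  have hsign : (-1:ℝ)^(p-1) * ((-1:ℝ)^s * (-1:ℝ)^(q+1-s)) = (-1:ℝ)^(q+1) * (-1:ℝ)^(p+1) := by
    rw [← pow_add, ← pow_add, show s+(q+1-s) = q+1 by omega,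
      show p+1 = (p-1)+2 by omega, pow_add]
    ring
  have hkey : (2:ℝ)^(p+q) * (((τ-1)/2)^(p-1) * (((τ+1)/2)^s * ((τ-1)/2)^(q+1-s)))
      = (τ-1)^(p+q-s) * (τ+1)^s := by
    have hsplit : ((2:ℝ))^(p+q) = 2^(p-1) * 2^s * 2^(q+1-s) := by
      rw [← pow_add, ← pow_add]; congr 1; omega
    have hpow : ((τ-1):ℝ)^(p+q-s) = (τ-1)^(p-1) * (τ-1)^(q+1-s) := by
      rw [← pow_add]; congr 1; omega
    rw [div_pow, div_pow, div_pow, hsplit, hpow]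
    have h1 : ((2:ℝ))^(p-1) ≠ 0 := by positivity
    have h2 : ((2:ℝ))^s ≠ 0 := by positivity
    have h3 : ((2:ℝ))^(q+1-s) ≠ 0 := by positivity
    field_simp
  linear_combination ((-1:ℝ)^(p-1) * ((-1:ℝ)^s * (-1:ℝ)^(q+1-s)))
      * (gchoose ((q:ℝ)-p) (q+1-s) * gchoose ((p:ℝ)+q) s) * hkey
    + (gchoose ((q:ℝ)-p) (q+1-s) * gchoose ((p:ℝ)+q) s)
      * ((τ-1)^(p+q-s) * (τ+1)^s) * hsign

end
end DetFM

/-- `det X_{p,q}(τ) = W₀ (1-τ²)^{p-1}` for a constant `W₀` independent of `τ`. -/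
theorem det_fundamental_matrix (p q : ℕ) (hp : 1 ≤ p) (hq : 2 ≤ q) :
    ∃ W₀ : ℝ, ∀ τ : ℝ, (Xmat p q τ).det = W₀ * (1 - τ ^ 2) ^ (p - 1) := by
  classical
  obtain ⟨w, hw⟩ := DetFM.ode_const (p-1) (DetFM.Pdet p q) (by
    have h := DetFM.ode p q hp hq
    rw [show ((p-1:ℕ):ℝ) = (p:ℝ)-1 from by rw [Nat.cast_sub hp]; norm_num]
    exact h)
  refine ⟨w / 4^(p+q), fun τ => ?_⟩
  have su : ∀ n : ℕ, (-1:ℝ)^n * (-1:ℝ)^n = 1 := fun n => by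
    rw [← pow_add]; exact Even.neg_one_pow ⟨n, by ring⟩
  have a1 := DetFM.Q1_eq p q hq τ
  have a2 := DetFM.Q1_eq p q hq (-τ)
  have b1 := DetFM.Q3_eq p q hp hq τ
  have b2 := DetFM.Q3_eq p q hp hq (-τ)
  rw [neg_neg] at b2
  have c1 : ((2:ℝ)^(p+q) * Q1 p q τ) * ((2:ℝ)^(p+q) * Q1 p q (-τ))
      = (DetFM.PA p q).eval τ * (DetFM.PA p q).eval (-τ) := by
    rw [a1, a2]
    linear_combination ((DetFM.PA p q).eval τ * (DetFM.PA p q).eval (-τ)) * su (p+1)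
  have c2 : ((2:ℝ)^(p+q) * Q3 p q τ) * ((2:ℝ)^(p+q) * Q3 p q (-τ))
      = (DetFM.PB p q).eval (-τ) * (DetFM.PB p q).eval τ := by
    rw [b1, b2]
    linear_combination ((-1:ℝ)^(p+1) * (-1:ℝ)^(p+1) * ((DetFM.PB p q).eval (-τ)
      * (DetFM.PB p q).eval τ)) * su (q+1)
      + ((DetFM.PB p q).eval (-τ) * (DetFM.PB p q).eval τ) * su (p+1)
  have hkey : (4:ℝ)^(p+q) * ((Xmat p q τ).det) = (DetFM.Pdet p q).eval τ := by
    rw [Xmat, Matrix.det_fin_two_of, DetFM.Pdet]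
    rw [Polynomial.eval_sub, Polynomial.eval_mul, Polynomial.eval_mul,
      Polynomial.eval_comp, Polynomial.eval_comp]
    simp only [Polynomial.eval_neg, Polynomial.eval_X]
    have h4 : (4:ℝ)^(p+q) = 2^(p+q) * 2^(p+q) := by rw [← mul_pow]; norm_num
    rw [h4]
    linear_combination c1 + (-((-1:ℝ)^(q+1) * (-1:ℝ)^(q+1))) * c2
      + (-((DetFM.PB p q).eval (-τ) * (DetFM.PB p q).eval τ)) * su (q+1)
  have hev : (DetFM.Pdet p q).eval τ = w * (1-τ^2)^(p-1) := by
    rw [hw]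
    simp [Polynomial.eval_mul, Polynomial.eval_pow]
  have h40 : ((4:ℝ))^(p+q) ≠ 0 := by positivity
  rw [div_mul_eq_mul_div, eq_div_iff h40]
  linear_combination hkey + hev
end

section
/- If the order-(p-1) jets J^{(p-1)}[υ] and J^{(p-1)}[φ] have polynomial dependence on τ, and the homogeneous system ∂_τ υ = Kυ + Q(υ⁰,υ) + Q(υ,υ⁰), with K a constant matrix, Q a constant bilinear map and υ⁰(τ) with polynomial entries, has a polynomial fundamental matrix, then the solution υ^{(p)} of the transport equation ∂_τ υ^{(p)} = Kυ^{(p)} + Q(υ⁰,υ^{(p)}) + Q(υ^{(p)},υ⁰) + Σ_{j=1}^{p-1} binom(p,j)(Q(υ^{(j)},υ^{(p-j)}) + L^{(j)}φ^{(p-j)}) + L^{(p)}φ⁰ is polynomial in τ. -/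
open MeasureTheory Filter Topology Polynomial Matrix intervalIntegral

namespace Transport

lemma norm_mulVec_le {n : ℕ} (A : Matrix (Fin n) (Fin n) ℝ) (x : Fin n → ℝ) :
    ‖A.mulVec x‖ ≤ (∑ i, ∑ j, |A i j|) * ‖x‖ := by
  apply pi_norm_le_iff_of_nonneg (by positivity) |>.2
  intro i
  calc ‖A.mulVec x i‖ = |∑ j, A i j * x j| := by simp [Matrix.mulVec, dotProduct, Real.norm_eq_abs]
    _ ≤ ∑ j, |A i j * x j| := Finset.abs_sum_le_sum_abs _ _
    _ ≤ ∑ j, |A i j| * ‖x‖ := by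
        refine Finset.sum_le_sum fun j _ => ?_
        rw [abs_mul]
        exact mul_le_mul_of_nonneg_left ((Real.norm_eq_abs (x j)) ▸ norm_le_pi_norm x j) (abs_nonneg _)
    _ = (∑ j, |A i j|) * ‖x‖ := by rw [Finset.sum_mul]
    _ ≤ (∑ i, ∑ j, |A i j|) * ‖x‖ := by
        apply mul_le_mul_of_nonneg_right _ (norm_nonneg x)
        exact Finset.single_le_sum (f := fun i => ∑ j, |A i j|) (fun k _ => by positivity) (Finset.mem_univ i)

lemma integral_abs_pow (m : ℕ) (τ : ℝ) :
    ∫ s in (0:ℝ)..τ, |s| ^ m = τ * |τ| ^ m / (m + 1) := by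
  rcases le_total 0 τ with h | h
  · rw [intervalIntegral.integral_congr (g := fun s => s ^ m)
      (fun s hs => by rw [Set.uIcc_of_le h] at hs; simp [abs_of_nonneg hs.1]),
      integral_pow, abs_of_nonneg h]
    ring
  · rw [intervalIntegral.integral_congr (g := fun s => (-1) ^ m * s ^ m)
      (fun s hs => by rw [Set.uIcc_of_ge h] at hs
                      rw [abs_of_nonpos hs.2, neg_pow]),
      intervalIntegral.integral_const_mul, integral_pow, abs_of_nonpos h, neg_pow]
    ring

variable {n : ℕ}

noncomputable def picard (M : ℝ → Matrix (Fin n) (Fin n) ℝ) (x0 : Fin n → ℝ) :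
    ℕ → ℝ → Fin n → ℝ
  | 0 => fun _ => x0
  | (k+1) => fun τ => x0 + ∫ s in (0:ℝ)..τ, (M s).mulVec (picard M x0 k s)

variable {M : ℝ → Matrix (Fin n) (Fin n) ℝ} {x0 : Fin n → ℝ}

lemma cont_mulVec (hMc : ∀ i j, Continuous fun t => M t i j) {u : ℝ → Fin n → ℝ}
    (hu : Continuous u) : Continuous fun s => (M s).mulVec (u s) := by
  apply continuous_pi
  intro i
  simp only [Matrix.mulVec, dotProduct]
  exact continuous_finset_sum _ fun j _ => (hMc i j).mul ((continuous_apply j).comp hu)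

lemma picard_cont (hMc : ∀ i j, Continuous fun t => M t i j) (k : ℕ) :
    Continuous (picard M x0 k) := by
  induction k with
  | zero => exact continuous_const
  | succ k ih =>
      show Continuous fun τ => x0 + ∫ s in (0:ℝ)..τ, (M s).mulVec (picard M x0 k s)
      exact continuous_const.add (intervalIntegral.continuous_primitive
        (fun a b => ((cont_mulVec hMc ih)).intervalIntegrable a b) 0)

lemma abs_le_of_mem_uIoc {s τ : ℝ} (hs : s ∈ Set.uIoc 0 τ) : |s| ≤ |τ| := by
  rcases Set.mem_uIoc.1 hs with h | h
  · rw [abs_of_pos h.1, abs_of_nonneg (le_of_lt (lt_of_lt_of_le h.1 h.2))]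
    exact h.2
  · rw [abs_of_nonpos h.2, abs_of_nonpos ((h.1.trans_le h.2)).le]
    linarith [h.1]

lemma picard_est (hMc : ∀ i j, Continuous fun t => M t i j) {R L : ℝ}
    (hL : ∀ t, |t| ≤ R → (∑ i, ∑ j, |M t i j|) ≤ L) (hL0 : 0 ≤ L) :
    ∀ k, ∀ τ, |τ| ≤ R →
      ‖picard M x0 (k+1) τ - picard M x0 k τ‖ ≤
        L * ‖x0‖ * (L ^ k * |τ| ^ (k+1) / (k+1).factorial) := by
  intro k
  induction k with
  | zero =>
      intro τ hτ
      have : picard M x0 1 τ - picard M x0 0 τ = ∫ s in (0:ℝ)..τ, (M s).mulVec x0 := by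
        show (x0 + ∫ s in (0:ℝ)..τ, (M s).mulVec (picard M x0 0 s)) - x0 = _
        simp [picard]
      rw [this]
      have hb : ∀ s ∈ Set.uIoc (0:ℝ) τ, ‖(M s).mulVec x0‖ ≤ L * ‖x0‖ := by
        intro s hs
        exact (norm_mulVec_le _ _).trans
          (mul_le_mul_of_nonneg_right (hL s ((abs_le_of_mem_uIoc hs).trans hτ)) (norm_nonneg _))
      refine (intervalIntegral.norm_integral_le_of_norm_le_const hb).trans (le_of_eq ?_)
      norm_num
  | succ k ih =>
      intro τ hτ
      have hik : Continuous fun s => (M s).mulVec (picard M x0 k s) :=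
        cont_mulVec hMc (picard_cont hMc k)
      have hik1 : Continuous fun s => (M s).mulVec (picard M x0 (k+1) s) :=
        cont_mulVec hMc (picard_cont hMc (k+1))
      have hdiff : picard M x0 (k+2) τ - picard M x0 (k+1) τ =
          ∫ s in (0:ℝ)..τ, ((M s).mulVec (picard M x0 (k+1) s) - (M s).mulVec (picard M x0 k s)) := by
        show (x0 + ∫ s in (0:ℝ)..τ, (M s).mulVec (picard M x0 (k+1) s))
            - (x0 + ∫ s in (0:ℝ)..τ, (M s).mulVec (picard M x0 k s)) = _
        rw [intervalIntegral.integral_sub (hik1.intervalIntegrable 0 τ) (hik.intervalIntegrable 0 τ)]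
        abel
      rw [hdiff]
      set C := L * ‖x0‖ with hC
      have hC0 : 0 ≤ C := by positivity
      have hb : ∀ᵐ s ∂(volume.restrict (Set.uIoc (0:ℝ) τ)),
          ‖(M s).mulVec (picard M x0 (k+1) s) - (M s).mulVec (picard M x0 k s)‖ ≤
            (C * L ^ (k+1) / (k+1).factorial) * |s| ^ (k+1) := by
        refine ae_restrict_of_forall_mem measurableSet_uIoc ?_
        intro s hs
        have hsR : |s| ≤ R := (abs_le_of_mem_uIoc hs).trans hτ
        rw [← Matrix.mulVec_sub]
        calc ‖(M s).mulVec (picard M x0 (k+1) s - picard M x0 k s)‖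
            ≤ (∑ i, ∑ j, |M s i j|) * ‖picard M x0 (k+1) s - picard M x0 k s‖ :=
              norm_mulVec_le _ _
          _ ≤ L * (C * (L ^ k * |s| ^ (k+1) / (k+1).factorial)) := by
              apply mul_le_mul (hL s hsR) (ih s hsR) (norm_nonneg _) hL0
          _ = (C * L ^ (k+1) / (k+1).factorial) * |s| ^ (k+1) := by
              rw [pow_succ]; ring
      have hint : IntervalIntegrable
          (fun s => (C * L ^ (k+1) / (k+1).factorial) * |s| ^ (k+1)) volume 0 τ :=
        (continuous_const.mul (continuous_abs.pow (k+1))).intervalIntegrable 0 τ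
      calc ‖∫ s in (0:ℝ)..τ, ((M s).mulVec (picard M x0 (k+1) s) - (M s).mulVec (picard M x0 k s))‖
          ≤ |∫ s in (0:ℝ)..τ, (C * L ^ (k+1) / (k+1).factorial) * |s| ^ (k+1)| :=
            intervalIntegral.norm_integral_le_abs_of_norm_le hb hint
        _ = C * (L ^ (k+1) * |τ| ^ (k+2) / (k+2).factorial) := by
            rw [intervalIntegral.integral_const_mul, integral_abs_pow, abs_mul]
            rw [abs_of_nonneg (by positivity : (0:ℝ) ≤ C * L ^ (k+1) / ((k+1).factorial : ℝ))]
            rw [abs_div, abs_mul,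
              abs_of_nonneg (pow_nonneg (abs_nonneg τ) (k+1)),
              abs_of_nonneg (by positivity : (0:ℝ) ≤ (((k+1:ℕ)):ℝ) + 1),
              Nat.factorial_succ (k+1)]
            have h3 : (((k+1).factorial : ℝ)) ≠ 0 := by positivity
            push_cast
            rw [pow_succ |τ| (k+1)]
            field_simp

lemma summable_aux {C L r : ℝ} (hC : 0 ≤ C) (hL : 0 ≤ L) (hr : 0 ≤ r) :
    Summable (fun k : ℕ => C * (L ^ k * r ^ (k+1) / (k+1).factorial)) := by
  refine Summable.of_nonneg_of_le (fun k => by positivity) (fun k => ?_)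
    ((Real.summable_pow_div_factorial (L*r)).mul_left (C*r))
  have h1 : (k.factorial : ℝ) ≤ ((k+1).factorial : ℝ) := by
    exact_mod_cast Nat.factorial_le (Nat.le_succ k)
  have h2 : (0:ℝ) < k.factorial := by positivity
  have e : C * (L ^ k * r ^ (k+1) / (k+1).factorial) = (C*r) * ((L*r)^k / (k+1).factorial) := by
    rw [mul_pow, pow_succ]; ring
  rw [e]
  gcongr

lemma exists_global_solution (hMc : ∀ i j, Continuous fun t => M t i j) (x0 : Fin n → ℝ) :
    ∃ w : ℝ → Fin n → ℝ, w 0 = x0 ∧ ∀ τ, HasDerivAt w ((M τ).mulVec (w τ)) τ := by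
  have hbnd : ∀ R : ℝ, ∃ L, 0 ≤ L ∧ ∀ t, |t| ≤ R → (∑ i, ∑ j, |M t i j|) ≤ L := by
    intro R
    have hb : Continuous fun t => ∑ i, ∑ j, |M t i j| :=
      continuous_finset_sum _ fun i _ => continuous_finset_sum _ fun j _ => (hMc i j).abs
    rcases (isCompact_Icc (a := -R) (b := R)).exists_bound_of_continuousOn hb.continuousOn
      with ⟨L, hL⟩
    refine ⟨max L 0, le_max_right _ _, fun t ht => ?_⟩
    have := hL t (abs_le.1 ht)
    rw [Real.norm_eq_abs] at this
    exact (le_abs_self _).trans (this.trans (le_max_left _ _))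
  choose Lf hLf0 hLf using hbnd
  set u : ℝ → ℕ → ℝ :=
    fun R k => Lf R * ‖x0‖ * ((Lf R) ^ k * R ^ (k+1) / (k+1).factorial) with hu_def
  have hu_sum : ∀ R, 0 ≤ R → Summable (u R) := fun R hR =>
    summable_aux (mul_nonneg (hLf0 R) (norm_nonneg _)) (hLf0 R) hR
  have hu_nonneg : ∀ R k, 0 ≤ R → 0 ≤ u R k := fun R k hR => by
    have := hLf0 R; positivity
  have hest : ∀ R, ∀ τ, |τ| ≤ R → ∀ k,
      ‖picard M x0 (k+1) τ - picard M x0 k τ‖ ≤ u R k := by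
    intro R τ hτ k
    refine (picard_est hMc (hLf R) (hLf0 R) k τ hτ).trans ?_
    have hR : 0 ≤ R := (abs_nonneg τ).trans hτ
    show _ ≤ Lf R * ‖x0‖ * ((Lf R) ^ k * R ^ (k+1) / (k+1).factorial)
    gcongr
    all_goals first
    | exact hτ
    | exact abs_nonneg τ
    | exact pow_nonneg (hLf0 R) k
    | exact mul_nonneg (hLf0 R) (norm_nonneg x0)
    | positivity
  have hcauchy : ∀ τ : ℝ, CauchySeq fun k => picard M x0 k τ := by
    intro τ
    apply cauchySeq_of_summable_dist
    refine Summable.of_nonneg_of_le (fun k => dist_nonneg) (fun k => ?_)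
      (hu_sum |τ| (abs_nonneg τ))
    rw [dist_eq_norm, norm_sub_rev]
    exact hest |τ| τ le_rfl k
  choose w hw using fun τ => cauchySeq_tendsto_of_complete (hcauchy τ)
  have hP0 : ∀ k, picard M x0 k 0 = x0 := by
    intro k
    cases k with
    | zero => rfl
    | succ k =>
        show x0 + ∫ s in (0:ℝ)..(0:ℝ), (M s).mulVec (picard M x0 k s) = x0
        rw [intervalIntegral.integral_same, add_zero]
  have hw0 : w 0 = x0 := by
    refine tendsto_nhds_unique (hw 0) ?_
    rw [funext hP0]
    exact tendsto_const_nhds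
  have hdistw : ∀ R, 0 ≤ R → ∀ τ, |τ| ≤ R → ∀ m,
      dist (picard M x0 m τ) (w τ) ≤ ∑' k, u R (m + k) := by
    intro R hR τ hτ m
    refine dist_le_tsum_of_dist_le_of_tendsto (u R) (fun k => ?_) (hu_sum R hR) (hw τ) m
    rw [dist_eq_norm, norm_sub_rev]
    exact hest R τ hτ k
  have htail : ∀ R, 0 ≤ R →
      Tendsto (fun m => ∑' k, u R (m + k)) atTop (𝓝 0) := by
    intro R hR
    have h1 : (fun m => ∑' k, u R (m + k)) = fun m => ∑' k, u R (k + m) := by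
      funext m
      exact tsum_congr fun k => by rw [Nat.add_comm]
    rw [h1]
    exact tendsto_sum_nat_add (u R)
  have hunif : ∀ R, 0 ≤ R →
      TendstoUniformlyOn (fun k τ => picard M x0 k τ) w atTop (Set.Icc (-R) R) := by
    intro R hR
    rw [Metric.tendstoUniformlyOn_iff]
    intro ε hε
    filter_upwards [(htail R hR).eventually (eventually_lt_nhds hε)] with m hm τ hτ
    rw [dist_comm]
    exact lt_of_le_of_lt (hdistw R hR τ (abs_le.2 ⟨hτ.1, hτ.2⟩) m) hm
  have hcw : Continuous w := by
    rw [continuous_iff_continuousAt]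
    intro τ
    have hcont : ContinuousOn w (Set.Icc (-(|τ|+1)) (|τ|+1)) :=
      (hunif (|τ|+1) (by positivity)).continuousOn
        (Filter.Eventually.of_forall fun k => (picard_cont hMc k).continuousOn).frequently
    exact hcont.continuousAt (Icc_mem_nhds (by linarith [neg_abs_le τ])
      (by linarith [le_abs_self τ]))
  have hPbound : ∀ R, 0 ≤ R → ∀ k s, |s| ≤ R →
      ‖picard M x0 k s‖ ≤ ‖x0‖ + ∑' j, u R j := by
    intro R hR k s hs
    have hmain : ∀ k, ‖picard M x0 k s‖ ≤ ‖x0‖ + ∑ j ∈ Finset.range k, u R j := by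
      intro k
      induction k with
      | zero => simp [picard]
      | succ k ih =>
          calc ‖picard M x0 (k+1) s‖
              ≤ ‖picard M x0 k s‖ + ‖picard M x0 (k+1) s - picard M x0 k s‖ :=
                norm_le_insert' _ _
            _ ≤ (‖x0‖ + ∑ j ∈ Finset.range k, u R j) + u R k :=
                add_le_add ih (hest R s hs k)
            _ = ‖x0‖ + ∑ j ∈ Finset.range (k+1), u R j := by
                rw [Finset.sum_range_succ]; ring
    refine (hmain k).trans (add_le_add_right ?_ _)
    exact (hu_sum R hR).sum_le_tsum _ (fun j _ => hu_nonneg R j hR)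
  have heq : ∀ τ, w τ = x0 + ∫ s in (0:ℝ)..τ, (M s).mulVec (w s) := by
    intro τ
    have h1 : Tendsto (fun k => picard M x0 (k+1) τ) atTop (𝓝 (w τ)) :=
      (hw τ).comp (tendsto_add_atTop_nat 1)
    set R := |τ| with hRdef
    set B := ‖x0‖ + ∑' j, u R j with hB
    have h2 : Tendsto (fun k => x0 + ∫ s in (0:ℝ)..τ, (M s).mulVec (picard M x0 k s)) atTop
        (𝓝 (x0 + ∫ s in (0:ℝ)..τ, (M s).mulVec (w s))) := by
      apply Tendsto.const_add
      apply intervalIntegral.tendsto_integral_filter_of_dominated_convergence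
        (bound := fun _ => Lf R * B)
      · exact Filter.Eventually.of_forall fun k =>
          (cont_mulVec hMc (picard_cont hMc k)).aestronglyMeasurable.restrict
      · refine Filter.Eventually.of_forall fun k => Filter.Eventually.of_forall fun s hs => ?_
        have hsR : |s| ≤ R := abs_le_of_mem_uIoc hs
        refine (norm_mulVec_le _ _).trans ?_
        exact mul_le_mul (hLf R s hsR) (hPbound R (abs_nonneg τ) k s hsR) (norm_nonneg _)
          (hLf0 R)
      · exact intervalIntegrable_const
      · refine Filter.Eventually.of_forall fun s _ => ?_
        have hmv : Continuous fun y : Fin n → ℝ => (M s).mulVec y := by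
          apply continuous_pi
          intro i
          simp only [Matrix.mulVec, dotProduct]
          exact continuous_finset_sum _ fun j _ => continuous_const.mul (continuous_apply j)
        exact (hmv.continuousAt.tendsto.comp (hw s))
    exact tendsto_nhds_unique h1 h2
  refine ⟨w, hw0, fun τ => ?_⟩
  have hcont : Continuous fun s => (M s).mulVec (w s) := cont_mulVec hMc hcw
  have hF : HasDerivAt (fun t => x0 + ∫ s in (0:ℝ)..t, (M s).mulVec (w s))
      ((M τ).mulVec (w τ)) τ :=
    ((hcont.integral_hasStrictDerivAt 0 τ).hasDerivAt).const_add x0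
  exact hF.congr_of_eventuallyEq (Filter.Eventually.of_forall heq)

lemma derivative_finset_prod {ι : Type*} [DecidableEq ι] (s : Finset ι) (f : ι → Polynomial ℝ) :
    derivative (∏ i ∈ s, f i) = ∑ i ∈ s, (∏ j ∈ s.erase i, f j) * derivative (f i) := by
  induction s using Finset.induction_on with
  | empty => simp
  | @insert a s ha ih =>
      rw [Finset.prod_insert ha, derivative_mul, ih, Finset.sum_insert ha,
        Finset.erase_insert ha, Finset.mul_sum]
      congr 1
      · ring
      · refine Finset.sum_congr rfl fun i hi => ?_
        rw [Finset.erase_insert_of_ne (by rintro rfl; exact ha hi),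
          Finset.prod_insert (fun h => ha (Finset.mem_of_mem_erase h))]
        ring

lemma derivative_det_col {m : ℕ} (A : Matrix (Fin m) (Fin m) (Polynomial ℝ)) :
    derivative A.det = ∑ j, (A.updateCol j fun i => derivative (A i j)).det := by
  rw [Matrix.det_apply', map_sum]
  have h1 : ∀ σ : Equiv.Perm (Fin m),
      derivative (((Equiv.Perm.sign σ : ℤ) : Polynomial ℝ) * ∏ i, A (σ i) i)
        = ∑ j, ((Equiv.Perm.sign σ : ℤ) : Polynomial ℝ) *
            ((∏ i ∈ Finset.univ.erase j, A (σ i) i) * derivative (A (σ j) j)) := by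
    intro σ
    rw [derivative_mul, Polynomial.derivative_intCast, zero_mul, zero_add,
      derivative_finset_prod, Finset.mul_sum]
  rw [Finset.sum_congr rfl fun σ _ => h1 σ, Finset.sum_comm]
  refine Finset.sum_congr rfl fun j _ => ?_
  rw [Matrix.det_apply']
  refine Finset.sum_congr rfl fun σ _ => ?_
  congr 1
  have h2 : ∀ i ∈ Finset.univ.erase j,
      (A.updateCol j (fun r => derivative (A r j))) (σ i) i = A (σ i) i := by
    intro i hi
    rw [Matrix.updateCol_apply, if_neg (Finset.ne_of_mem_erase hi)]
  rw [← Finset.mul_prod_erase Finset.univ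
      (fun i => (A.updateCol j (fun r => derivative (A r j))) (σ i) i) (Finset.mem_univ j),
    Matrix.updateCol_apply, if_pos rfl, Finset.prod_congr rfl h2, mul_comm]

lemma derivative_det_row {m : ℕ} (A : Matrix (Fin m) (Fin m) (Polynomial ℝ)) :
    derivative A.det = ∑ i, (A.updateRow i fun j => derivative (A i j)).det := by
  rw [← Matrix.det_transpose A, derivative_det_col]
  refine Finset.sum_congr rfl fun i _ => ?_
  rw [← Matrix.det_transpose (A.updateRow i fun j => derivative (A i j))]
  congr 1
  exact Matrix.updateCol_transpose

noncomputable def pint (p : Polynomial ℝ) : Polynomial ℝ :=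
  p.sum fun k a => Polynomial.C (a / (k+1)) * Polynomial.X ^ (k+1)

lemma derivative_pint (p : Polynomial ℝ) : derivative (pint p) = p := by
  rw [pint, Polynomial.sum, map_sum]
  conv_rhs => rw [← Polynomial.sum_C_mul_X_pow_eq p]
  rw [Polynomial.sum]
  refine Finset.sum_congr rfl fun k _ => ?_
  rw [Polynomial.derivative_C_mul_X_pow, Nat.add_sub_cancel]
  have h0 : ((k:ℝ) + 1) ≠ 0 := by positivity
  congr 2
  push_cast
  field_simp

lemma poly_deriv_identity {m : ℕ} {M : ℝ → Matrix (Fin m) (Fin m) ℝ}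
    {Mp : Matrix (Fin m) (Fin m) (Polynomial ℝ)}
    (hM : ∀ τ i j, M τ i j = (Mp i j).eval τ) {w : ℝ → Fin m → ℝ}
    (hw : ∀ τ, HasDerivAt w ((M τ).mulVec (w τ)) τ) {wp : Fin m → Polynomial ℝ}
    (hwp : ∀ τ i, w τ i = (wp i).eval τ) :
    ∀ i, derivative (wp i) = ∑ j, Mp i j * wp j := by
  intro i
  apply Polynomial.funext
  intro τ
  have h1 : HasDerivAt (fun t => (wp i).eval t) (((M τ).mulVec (w τ)) i) τ :=
    ((hasDerivAt_pi.1 (hw τ)) i).congr_of_eventuallyEq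
      (Filter.Eventually.of_forall fun t => (hwp t i).symm)
  have h3 := h1.unique ((wp i).hasDerivAt τ)
  rw [← h3]
  simp [Matrix.mulVec, dotProduct, hM, hwp, Polynomial.eval_finset_sum]

end Transport

open Polynomial Transport in
/-- Lemma 6.2: for a linear ODE system `∂_τ v = M(τ)v + g(τ)` with
polynomial coefficient matrix `M` and polynomial source `g`, if every solution of the
homogeneous system is polynomial in `τ`, then every solution of the inhomogeneous system
is polynomial in `τ`. -/
theorem transport_solutions_polynomial
    (n : ℕ) (M : ℝ → Matrix (Fin n) (Fin n) ℝ) (g v : ℝ → Fin n → ℝ)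
    (Mp : Matrix (Fin n) (Fin n) (Polynomial ℝ))
    (hM : ∀ τ i j, M τ i j = (Mp i j).eval τ)
    (gp : Fin n → Polynomial ℝ) (hg : ∀ τ i, g τ i = (gp i).eval τ)
    -- the homogeneous system has only polynomial solutions
    (hhom : ∀ w : ℝ → Fin n → ℝ,
      (∀ τ : ℝ, HasDerivAt w ((M τ).mulVec (w τ)) τ) →
      ∃ wp : Fin n → Polynomial ℝ, ∀ τ i, w τ i = (wp i).eval τ)
    -- v solves the inhomogeneous system
    (hv : ∀ τ : ℝ, HasDerivAt v ((M τ).mulVec (v τ) + g τ) τ) :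
    ∃ vp : Fin n → Polynomial ℝ, ∀ τ i, v τ i = (vp i).eval τ := by
  classical
  have hMc : ∀ i j, Continuous fun t => M t i j := by
    intro i j
    have h : (fun t => M t i j) = fun t => (Mp i j).eval t := funext fun t => hM t i j
    rw [h]
    exact (Mp i j).continuous
  -- fundamental system of polynomial solutions
  have hcol : ∀ l : Fin n, ∃ wp : Fin n → Polynomial ℝ,
      (∀ i, (wp i).eval 0 = if i = l then 1 else 0) ∧
      (∀ i, derivative (wp i) = ∑ j, Mp i j * wp j) := by
    intro l
    obtain ⟨w, hw0, hwd⟩ := exists_global_solution hMc (Pi.single l 1)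
    obtain ⟨wp, hwp⟩ := hhom w hwd
    refine ⟨wp, fun i => ?_, poly_deriv_identity hM hwd hwp⟩
    rw [← hwp 0 i, hw0, Pi.single_apply]
  choose Φc hΦ0 hΦd using hcol
  set Φ : Matrix (Fin n) (Fin n) (Polynomial ℝ) := fun i l => Φc l i with hΦdef
  have hder : ∀ i l, derivative (Φ i l) = ∑ k, Mp i k * Φ k l := fun i l => hΦd l i
  -- Liouville identity
  have hdet : derivative Φ.det = (∑ i, Mp i i) * Φ.det := by
    rw [derivative_det_row]
    have h1 : ∀ i : Fin n, (Φ.updateRow i fun j => derivative (Φ i j)).det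
        = Mp i i * Φ.det := by
      intro i
      have hrow : (fun j => derivative (Φ i j)) = ∑ k, Mp i k • Φ k := by
        funext j
        rw [hder i j]
        simp [Finset.sum_apply]
      rw [hrow, Matrix.det_updateRow_sum, smul_eq_mul]
    rw [Finset.sum_congr rfl fun i _ => h1 i, ← Finset.sum_mul]
  -- the Wronskian is the constant 1
  have hD0 : Φ.det.eval 0 = 1 := by
    rw [show Φ.det.eval 0 = ((Polynomial.evalRingHom (0:ℝ)) Φ.det) from rfl,
      RingHom.map_det, RingHom.mapMatrix_apply]
    have : Φ.map (Polynomial.evalRingHom (0:ℝ)) = (1 : Matrix (Fin n) (Fin n) ℝ) := by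
      ext i l
      rw [Matrix.map_apply]
      show (Φc l i).eval 0 = _
      rw [hΦ0 l i, Matrix.one_apply]
    rw [this, Matrix.det_one]
  have hDne : Φ.det ≠ 0 := by
    intro h
    rw [h] at hD0
    simp at hD0
  have htr : (∑ i, Mp i i) = 0 := by
    by_contra ht
    have h3 := Polynomial.degree_derivative_lt hDne
    rw [hdet, Polynomial.degree_mul] at h3
    have h4 : (0:WithBot ℕ) ≤ (∑ i, Mp i i).degree := Polynomial.zero_le_degree_iff.2 ht
    have h5 : Φ.det.degree ≤ (∑ i, Mp i i).degree + Φ.det.degree := by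
      calc Φ.det.degree = 0 + Φ.det.degree := by rw [zero_add]
        _ ≤ (∑ i, Mp i i).degree + Φ.det.degree := add_le_add_left h4 _
    exact absurd (lt_of_le_of_lt h5 h3) (lt_irrefl _)
  have hD1 : Φ.det = 1 := by
    have h0 : derivative Φ.det = 0 := by rw [hdet, htr, zero_mul]
    have hc := Polynomial.eq_C_of_derivative_eq_zero h0
    rw [hc, Polynomial.eval_C] at hD0
    rw [hc, hD0, Polynomial.C_1]
  -- polynomial particular solution via variation of constants
  have hadj : Φ * Φ.adjugate = 1 := by
    rw [Matrix.mul_adjugate, hD1, one_smul]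
  set cg : Fin n → Polynomial ℝ := (Φ.adjugate).mulVec gp with hcg
  set q : Fin n → Polynomial ℝ := Φ.mulVec (fun l => pint (cg l)) with hq_def
  have hq : ∀ i, derivative (q i) = (∑ j, Mp i j * q j) + gp i := by
    intro i
    show derivative (∑ l, Φ i l * pint (cg l)) = _
    rw [map_sum]
    have h1 : ∀ l, derivative (Φ i l * pint (cg l))
        = derivative (Φ i l) * pint (cg l) + Φ i l * cg l := by
      intro l
      rw [Polynomial.derivative_mul, derivative_pint]
    rw [Finset.sum_congr rfl fun l _ => h1 l, Finset.sum_add_distrib]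
    congr 1
    · have h2 : ∀ l, derivative (Φ i l) * pint (cg l)
          = ∑ k, Mp i k * (Φ k l * pint (cg l)) := by
        intro l
        rw [hder i l, Finset.sum_mul]
        exact Finset.sum_congr rfl fun k _ => by ring
      rw [Finset.sum_congr rfl fun l _ => h2 l, Finset.sum_comm]
      refine Finset.sum_congr rfl fun k _ => ?_
      rw [← Finset.mul_sum]
      rfl
    · show ∑ l, Φ i l * cg l = gp i
      have h3 : (Φ.mulVec cg) i = gp i := by
        rw [hcg, Matrix.mulVec_mulVec, hadj, Matrix.one_mulVec]
      exact h3
  set qv : ℝ → Fin n → ℝ := fun τ i => (q i).eval τ with hqv_def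
  have hqv : ∀ τ, HasDerivAt qv ((M τ).mulVec (qv τ) + g τ) τ := by
    intro τ
    apply hasDerivAt_pi.2
    intro i
    have h2 := (q i).hasDerivAt τ
    have h4 : (derivative (q i)).eval τ = ((M τ).mulVec (qv τ) + g τ) i := by
      rw [hq i]
      simp [Matrix.mulVec, dotProduct, hM, hg, Polynomial.eval_finset_sum, hqv_def]
    rw [h4] at h2
    exact h2
  obtain ⟨wp, hwp⟩ := hhom (fun t => v t - qv t) (fun τ => by
    have h5 := (hv τ).sub (hqv τ)
    have h6 : (M τ).mulVec (v τ) + g τ - ((M τ).mulVec (qv τ) + g τ)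
        = (M τ).mulVec (v τ - qv τ) := by
      rw [Matrix.mulVec_sub]
      abel
    rw [h6] at h5
    exact h5)
  refine ⟨fun i => wp i + q i, fun τ i => ?_⟩
  have h7 := hwp τ i
  simp only [Pi.sub_apply] at h7
  rw [Polynomial.eval_add, ← h7]
  show v τ i = v τ i - (q i).eval τ + (q i).eval τ
  ring
end
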